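/- arXiv:2204.05932 — 5 statements merged into one kernel-verified Lean document; each statement's English description precedes it below -/
import Mathlib

section
/- For all real numbers a, b > 0 it holds that a·log₂(a) + b·log₂(b) + 2·min(a,b) ≤ (a+b)·log₂(a+b). -/
/-!
Write the deficit as `a log₂((a+b)/a) + b log₂((a+b)/b)`; each term is at least `min a b`.
For the larger of the two variables this is `log₂(1 + t) ≥ t` on `[0, 1]` (Bernoulli's
inequality `2 ^ t ≤ 1 + t`), for the smaller one it is `(a+b)/a ≥ 2`.
-/

open Real

lemma le_logb_two_one_add {t : ℝ} (ht₀ : 0 ≤ t) (ht₁ : t ≤ 1) : t ≤ logb 2 (1 + t) := by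
  rw [le_logb_iff_rpow_le one_lt_two (by linarith)]
  simpa [one_add_one_eq_two, mul_one] using
    rpow_one_add_le_one_add_mul_self (s := 1) (by norm_num) ht₀ ht₁

lemma min_le_mul_logb_two_add_div {x y : ℝ} (hx : 0 < x) (hy : 0 < y) :
    min x y ≤ x * logb 2 ((x + y) / x) := by
  rcases le_total x y with hxy | hyx
  · have h : 1 ≤ logb 2 ((x + y) / x) := by
      rw [le_logb_iff_rpow_le one_lt_two (by positivity), rpow_one, le_div_iff₀ hx]
      linarith
    rw [min_eq_left hxy]
    exact le_mul_of_one_le_right hx.le h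
  · have h : y / x ≤ logb 2 ((x + y) / x) := by
      rw [add_div, div_self hx.ne']
      exact le_logb_two_one_add (by positivity) ((div_le_one hx).2 hyx)
    rw [min_eq_right hyx]
    calc y = x * (y / x) := (mul_div_cancel₀ y hx.ne').symm
      _ ≤ x * logb 2 ((x + y) / x) := mul_le_mul_of_nonneg_left h hx.le

lemma add_mul_logb_add_sub {c x y : ℝ} (hx : 0 < x) (hy : 0 < y) :
    (x + y) * logb c (x + y) - x * logb c x - y * logb c y =
      x * logb c ((x + y) / x) + y * logb c ((x + y) / y) := by
  have hxy : x + y ≠ 0 := by positivity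
  rw [logb_div hxy hx.ne', logb_div hxy hy.ne']
  ring

theorem stmt_1 (a b : ℝ) (ha : 0 < a) (hb : 0 < b) :
    a * Real.logb 2 a + b * Real.logb 2 b + 2 * min a b ≤ (a + b) * Real.logb 2 (a + b) := by
  have hab := min_le_mul_logb_two_add_div ha hb
  have hba := min_le_mul_logb_two_add_div hb ha
  rw [add_comm b a, min_comm] at hba
  linarith [add_mul_logb_add_sub (c := 2) ha hb]
end

section
/- For all t ∈ (0, 1/2], it holds that 2t + t·log₂(t) + (1-t)·log₂(1-t) ≤ 0. -/
/-! The binary entropy `H` is concave on `[0, 1]` with `H 0 = 0` and `H (1/2) = log 2`, so on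
`[0, 1/2]` it lies above the chord `t ↦ 2 t log 2`. Dividing by `log 2` gives the claim, whose
left-hand side is `2 t - H t / log 2`. -/

open Real

lemma two_mul_mul_log_two_le_binEntropy {t : ℝ} (ht₀ : 0 ≤ t) (ht₁ : t ≤ 2⁻¹) :
    2 * t * log 2 ≤ binEntropy t := by
  have hchord := strictConcave_binEntropy.concaveOn.2
    (show (0 : ℝ) ∈ Set.Icc 0 1 by norm_num) (show (2⁻¹ : ℝ) ∈ Set.Icc 0 1 by norm_num)
    (show 0 ≤ 1 - 2 * t by linarith) (show 0 ≤ 2 * t by linarith) (by ring)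
  simp only [binEntropy_zero, binEntropy_two_inv, smul_eq_mul, mul_zero, zero_add] at hchord
  rwa [show 2 * t * 2⁻¹ = t by ring] at hchord

lemma mul_logb_two_add_mul_logb_two_one_sub (t : ℝ) :
    t * logb 2 t + (1 - t) * logb 2 (1 - t) = -(binEntropy t / log 2) := by
  rw [binEntropy_eq_negMulLog_add_negMulLog_one_sub, negMulLog, negMulLog, logb, logb]
  ring

theorem stmt_2 (t : ℝ) (ht : t ∈ Set.Ioc 0 (1 / 2 : ℝ)) :
    2 * t + t * Real.logb 2 t + (1 - t) * Real.logb 2 (1 - t) ≤ 0 := by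
  obtain ⟨ht₀, ht₁⟩ := ht
  have hentropy := two_mul_mul_log_two_le_binEntropy ht₀.le (by linarith : t ≤ 2⁻¹)
  rw [add_assoc, mul_logb_two_add_mul_logb_two_one_sub, add_neg_nonpos_iff,
    le_div_iff₀ (log_pos one_lt_two)]
  exact hentropy
end

section
/- Let S be a set of n real numbers each of absolute value at least 1. Then for each α ∈ ℝ, the number of subsets of S whose sum of elements lies in the half-open interval [α, α+1) is at most the binomial coefficient C(n, ⌊n/2⌋). -/
open Finset

theorem stmt_6 (S : Finset ℝ) (h : ∀ x ∈ S, 1 ≤ |x|) (α : ℝ) :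
    Nat.card {T : Finset ℝ // T ⊆ S ∧ α ≤ T.sum id ∧ T.sum id < α + 1} ≤
      (S.card).choose (S.card / 2) := by
  classical
  set P : Finset ℝ → Prop := fun T => α ≤ T.sum id ∧ T.sum id < α + 1 with hP
  set 𝒯 : Finset (Finset ℝ) := S.powerset.filter P with h𝒯
  -- the subtype has cardinality 𝒯.card
  have hcard : Nat.card {T : Finset ℝ // T ⊆ S ∧ α ≤ T.sum id ∧ T.sum id < α + 1}
      = 𝒯.card := by
    rw [← Fintype.card_coe 𝒯, ← Nat.card_eq_fintype_card]
    apply Nat.card_congr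
    apply Equiv.subtypeEquivRight
    intro T
    simp [h𝒯, hP, and_assoc]
  rw [hcard]
  -- the flip map
  set F : Finset ℝ → Finset {x // x ∈ S} := fun T =>
    S.attach.filter (fun x => (0 < x.1 ∧ x.1 ∈ T) ∨ (x.1 < 0 ∧ x.1 ∉ T)) with hF
  have hne : ∀ x ∈ S, x ≠ 0 := by
    intro x hx hx0
    have := h x hx
    rw [hx0] at this; simp at this; linarith
  -- key sum identity
  have hsum : ∀ T : Finset ℝ, T ⊆ S →
      T.sum id = (∑ a ∈ F T, |a.1|) + ∑ x ∈ S.filter (fun x => x < 0), x := by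
    intro T hTS
    have h1 : (∑ a ∈ F T, |a.1|)
        = ∑ x ∈ S.filter (fun x => (0 < x ∧ x ∈ T) ∨ (x < 0 ∧ x ∉ T)), |x| := by
      rw [hF]
      rw [Finset.sum_filter, Finset.sum_filter, Finset.sum_attach S
        (fun x => if (0 < x ∧ x ∈ T) ∨ (x < 0 ∧ x ∉ T) then |x| else 0)]
    rw [h1, Finset.sum_filter, Finset.sum_filter, ← Finset.sum_add_distrib]
    have h2 : T.sum id = ∑ x ∈ S, if x ∈ T then x else 0 := by
      rw [← Finset.sum_filter]
      congr 1
      exact (Finset.filter_mem_eq_inter.trans (by rw [Finset.inter_eq_right.2 hTS])).symm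
    rw [h2]
    apply Finset.sum_congr rfl
    intro x hx
    rcases lt_or_gt_of_ne (hne x hx) with hneg | hpos
    · rw [if_pos hneg]
      by_cases hT : x ∈ T
      · rw [if_pos hT, if_neg fun hc => hc.elim
          (fun h0 => absurd h0.1 (not_lt.2 hneg.le)) (fun h1 => h1.2 hT)]
        ring
      · rw [if_neg hT, if_pos (Or.inr ⟨hneg, hT⟩), abs_of_neg hneg]; ring
    · rw [if_neg (not_lt.2 hpos.le)]
      by_cases hT : x ∈ T
      · rw [if_pos hT, if_pos (Or.inl ⟨hpos, hT⟩), abs_of_pos hpos]; ring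
      · rw [if_neg hT, if_neg fun hc => hc.elim
          (fun h0 => hT h0.2) (fun h1 => absurd h1.1 (not_lt.2 hpos.le))]
        ring
  -- injectivity of F on 𝒯
  have hinj : Set.InjOn F (𝒯 : Set (Finset ℝ)) := by
    intro T hT T' hT' hEq
    simp only [h𝒯, coe_filter, Set.mem_setOf_eq, Finset.mem_powerset] at hT hT'
    ext x
    by_cases hxS : x ∈ S
    · have hmem : ((0 < x ∧ x ∈ T) ∨ (x < 0 ∧ x ∉ T)) ↔
          ((0 < x ∧ x ∈ T') ∨ (x < 0 ∧ x ∉ T')) := by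
        have := Finset.ext_iff.1 hEq ⟨x, hxS⟩
        simpa [hF] using this
      rcases lt_or_gt_of_ne (hne x hxS) with hneg | hpos
      · have h1 : ¬ (0:ℝ) < x := not_lt.2 hneg.le
        tauto
      · have h1 : ¬ x < 0 := not_lt.2 hpos.le
        tauto
    · have e1 : x ∉ T := fun hm => hxS (hT.1 hm)
      have e2 : x ∉ T' := fun hm => hxS (hT'.1 hm)
      tauto
  -- image is an antichain
  set 𝒜 : Finset (Finset {x // x ∈ S}) := 𝒯.image F with h𝒜
  have hanti : IsAntichain (· ⊆ ·) (𝒜 : Set (Finset {x // x ∈ S})) := by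
    intro A hA B hB hAB hsub
    simp only [h𝒜, coe_image, Set.mem_image, mem_coe] at hA hB
    obtain ⟨T, hT, rfl⟩ := hA
    obtain ⟨T', hT', rfl⟩ := hB
    simp only [h𝒯, Finset.mem_filter, Finset.mem_powerset, hP] at hT hT'
    have hss : F T ⊂ F T' := ⟨hsub, fun hc => hAB (Finset.Subset.antisymm hsub hc)⟩
    obtain ⟨a, haT', haT⟩ := Finset.exists_of_ssubset hss
    have hge : (∑ x ∈ F T, |x.1|) + 1 ≤ ∑ x ∈ F T', |x.1| := by
      have h1 : (∑ x ∈ insert a (F T), |x.1|) = |a.1| + ∑ x ∈ F T, |x.1| :=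
        Finset.sum_insert haT
      have h2 : insert a (F T) ⊆ F T' := Finset.insert_subset haT' hsub
      have h3 : (∑ x ∈ insert a (F T), |x.1|) ≤ ∑ x ∈ F T', |x.1| :=
        Finset.sum_le_sum_of_subset_of_nonneg h2 (fun _ _ _ => abs_nonneg _)
      have h4 : (1 : ℝ) ≤ |a.1| := h a.1 a.2
      linarith
    have e1 := hsum T hT.1
    have e2 := hsum T' hT'.1
    have := hT.2.1; have := hT.2.2; have := hT'.2.1; have := hT'.2.2
    linarith
  have hcard2 : 𝒯.card = 𝒜.card := (Finset.card_image_of_injOn hinj).symm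
  rw [hcard2]
  have hs := IsAntichain.sperner hanti
  rwa [Fintype.card_coe] at hs
end

section
/- Let G be an n-vertex graph and U ⊆ V(G) with |U| = k such that for every u ∈ U, the set N_G(u) \ (U ∪ ⋃_{u'∈U, u'≠u} N_G(u')) has size at least k. Then f(G) ≥ k, i.e., G has an induced subgraph with at least k distinct vertex degrees. -/
theorem stmt_11 {V : Type*} [Fintype V] [DecidableEq V] (G : SimpleGraph V) [DecidableRel G.Adj]
    (U : Finset V) (k : ℕ) (hcard : U.card = k)
    (h : ∀ u ∈ U, k ≤
      ((G.neighborFinset u) \ (U ∪ (U.erase u).biUnion (fun w => G.neighborFinset w))).card) :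
    ∃ S W : Finset V, W ⊆ S ∧ W.card = k ∧
      ∀ u ∈ W, ∀ v ∈ W, u ≠ v →
        (S.filter fun w => G.Adj u w).card ≠ (S.filter fun w => G.Adj v w).card := by
  classical
  set ι : V → ℕ := fun v => (Fintype.equivFin V v : ℕ) with hιdef
  have hιinj : Function.Injective ι := by
    intro x y hxy
    have := (Fintype.equivFin V).injective (Fin.val_injective hxy)
    exact this
  set priv : V → Finset V := fun u =>
    (G.neighborFinset u) \ (U ∪ (U.erase u).biUnion (fun w => G.neighborFinset w)) with hprivdef
  set a : V → ℕ := fun u => (U.filter fun w => G.Adj u w).card with hadef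
  -- lexicographic relation
  set lex : V → V → Prop := fun v u => a v < a u ∨ (a v = a u ∧ ι v < ι u) with hlexdef
  have lex_trans : ∀ {x y z : V}, lex x y → lex y z → lex x z := by
    intro x y z hxy hyz
    simp only [hlexdef] at *
    omega
  have lex_irrefl : ∀ x : V, ¬ lex x x := by
    intro x hx
    simp only [hlexdef] at hx
    omega
  have lex_total : ∀ {x y : V}, x ≠ y → lex x y ∨ lex y x := by
    intro x y hxy
    have : ι x ≠ ι y := fun hh => hxy (hιinj hh)
    simp only [hlexdef]
    omega
  set rk : V → ℕ := fun u => (U.filter fun v => lex v u).card with hrkdef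
  have hrk_lt : ∀ u ∈ U, rk u < k := by
    intro u hu
    have hss : (U.filter fun v => lex v u) ⊂ U := by
      refine Finset.ssubset_iff_of_subset (Finset.filter_subset _ _) |>.mpr ?_
      exact ⟨u, hu, by simp [lex_irrefl u]⟩
    have h2 := Finset.card_lt_card hss
    simp only [hrkdef]
    omega
  -- choose private neighbor sets
  have hex : ∀ u : V, ∃ t : Finset V, t ⊆ priv u ∧ (u ∈ U → t.card = rk u) := by
    intro u
    by_cases hu : u ∈ U
    · have hkle : rk u ≤ (priv u).card := le_trans (le_of_lt (hrk_lt u hu)) (h u hu)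
      obtain ⟨t, ht, htc⟩ := Finset.exists_subset_card_eq hkle
      exact ⟨t, ht, fun _ => htc⟩
    · exact ⟨∅, by simp, fun hu' => absurd hu' hu⟩
  choose P hPsub hPcard using hex
  set S : Finset V := U ∪ U.biUnion P with hSdef
  refine ⟨S, U, Finset.subset_union_left, hcard, ?_⟩
  -- degree computation
  have hdeg : ∀ u ∈ U, (S.filter fun w => G.Adj u w).card = a u + rk u := by
    intro u hu
    have hfilU : S.filter (fun w => G.Adj u w) =
        (U.filter fun w => G.Adj u w) ∪ ((U.biUnion P).filter fun w => G.Adj u w) := by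
      rw [hSdef, Finset.filter_union]
    have hfilB : ((U.biUnion P).filter fun w => G.Adj u w) = P u := by
      ext x
      simp only [Finset.mem_filter, Finset.mem_biUnion]
      constructor
      · rintro ⟨⟨u', hu', hx⟩, hadj⟩
        by_cases heq : u' = u
        · subst heq; exact hx
        · exfalso
          have hxp : x ∈ priv u' := hPsub u' hx
          simp only [hprivdef, Finset.mem_sdiff, Finset.mem_union, Finset.mem_biUnion,
            SimpleGraph.mem_neighborFinset, Finset.mem_erase] at hxp
          exact hxp.2 (Or.inr ⟨u, ⟨fun hh => heq hh.symm, hu⟩, hadj⟩)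
      · intro hx
        have hxp : x ∈ priv u := hPsub u hx
        simp only [hprivdef, Finset.mem_sdiff, SimpleGraph.mem_neighborFinset] at hxp
        exact ⟨⟨u, hu, hx⟩, hxp.1⟩
    have hdisj : Disjoint (U.filter fun w => G.Adj u w) (P u) := by
      refine Finset.disjoint_left.mpr ?_
      intro x hx hx'
      have hxp : x ∈ priv u := hPsub u hx'
      simp only [hprivdef, Finset.mem_sdiff, Finset.mem_union] at hxp
      exact hxp.2 (Or.inl (Finset.mem_filter.mp hx).1)
    rw [hfilU, hfilB, Finset.card_union_of_disjoint hdisj, hPcard u hu]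
  -- injectivity
  have key : ∀ u ∈ U, ∀ v ∈ U, lex v u → a v + rk v < a u + rk u := by
    intro u hu v hv hlvu
    have hav : a v ≤ a u := by
      rcases hlvu with h1 | h2
      · exact le_of_lt h1
      · exact le_of_eq h2.1
    have hrkvu : rk v < rk u := by
      apply Finset.card_lt_card
      refine Finset.ssubset_iff_of_subset ?_ |>.mpr ⟨v, by simp [hv, hlvu], by simp [lex_irrefl v]⟩
      intro w hw
      simp only [Finset.mem_filter] at hw ⊢
      exact ⟨hw.1, lex_trans hw.2 hlvu⟩
    omega
  intro u hu v hv huv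
  rw [hdeg u hu, hdeg v hv]
  rcases lex_total huv with hl | hl
  · exact Nat.ne_of_lt (key v hv u hu hl)
  · exact Nat.ne_of_gt (key u hu v hv hl)
end

section
/- Let k ≥ 1 be a real number and let k₁, k₂ > 0 satisfy k₁ + k₂ ≥ k − √k/300 and min(k₁,k₂) ≥ k^{2/3}/2, with k sufficiently large (k ≥ 2^{25}). Then k₁^{3/4} + k₂^{3/4} ≥ k^{3/4} + √k/300. -/
/-!
Write `ε = √k / 300` and let `k₂ ≤ k₁`. Bernoulli's inequality for the concave power `x ↦ x ^ (3/4)`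
gives `(k₁ + k₂) ^ (3/4) ≤ k₁ ^ (3/4) + (3/4) k₂ ^ (3/4)`, so the smaller part contributes a surplus of
at least `k₂ ^ (3/4) / 4 ≥ √k / 8`, using `k₂ ≥ k^(2/3) / 2`. Subadditivity of `x ↦ x ^ (3/4)` bounds
the loss from `k₁ + k₂ ≥ k - ε` by `ε ^ (3/4) ≤ ε`, and `√k / 8 ≥ 2ε` leaves the required gain `ε`.
-/

open Real

/-- Tangent line of `x ^ p` at `a` (Bernoulli), then `a ^ (p - 1) ≤ b ^ (p - 1)`. -/
lemma add_rpow_le_rpow_add_mul_rpow_of_le {p a b : ℝ} (hp₀ : 0 ≤ p) (hp₁ : p ≤ 1)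
    (hb : 0 < b) (hba : b ≤ a) :
    (a + b) ^ p ≤ a ^ p + p * b ^ p := by
  have ha : 0 < a := hb.trans_le hba
  have hbern : (1 + b / a) ^ p ≤ 1 + p * (b / a) :=
    rpow_one_add_le_one_add_mul_self (neg_one_lt_zero.trans (div_pos hb ha)).le hp₀ hp₁
  have hdecay : b * a ^ (p - 1) ≤ b ^ p := calc
    b * a ^ (p - 1) ≤ b * b ^ (p - 1) :=
      mul_le_mul_of_nonneg_left (rpow_le_rpow_of_nonpos hb hba (by linarith)) hb.le
    _ = b ^ p := by rw [mul_comm, ← rpow_add_one hb.ne', sub_add_cancel]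
  calc (a + b) ^ p = a ^ p * (1 + b / a) ^ p := by
        rw [← mul_rpow ha.le (by positivity), mul_add, mul_one, mul_div_cancel₀ _ ha.ne']
    _ ≤ a ^ p * (1 + p * (b / a)) := by gcongr
    _ = a ^ p + p * (b * (a ^ p / a)) := by ring
    _ = a ^ p + p * (b * a ^ (p - 1)) := by rw [rpow_sub_one ha.ne']
    _ ≤ a ^ p + p * b ^ p := by gcongr

lemma sqrt_div_two_le_rpow_of_rpow_two_thirds_div_two_le {k x : ℝ} (hk : 0 ≤ k)
    (hx : k ^ ((2 : ℝ) / 3) / 2 ≤ x) :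
    √k / 2 ≤ x ^ ((3 : ℝ) / 4) := calc
  √k / 2 ≤ √k / 2 ^ ((3 : ℝ) / 4) := by
    gcongr
    exact rpow_le_self_of_one_le (by norm_num) (by norm_num)
  _ = (k ^ ((2 : ℝ) / 3) / 2) ^ ((3 : ℝ) / 4) := by
    rw [div_rpow (by positivity) (by norm_num), ← rpow_mul hk, sqrt_eq_rpow]
    norm_num
  _ ≤ x ^ ((3 : ℝ) / 4) := by gcongr

theorem stmt_18_general (k k₁ k₂ : ℝ) (hk : (2 : ℝ) ^ (25 : ℕ) ≤ k)
    (hsum : k - Real.sqrt k / 300 ≤ k₁ + k₂)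
    (hmin : k ^ ((2 : ℝ) / 3) / 2 ≤ min k₁ k₂) :
    k ^ ((3 : ℝ) / 4) + Real.sqrt k / 300 ≤ k₁ ^ ((3 : ℝ) / 4) + k₂ ^ ((3 : ℝ) / 4) := by
  wlog h21 : k₂ ≤ k₁ generalizing k₁ k₂
  · have := this k₂ k₁ (by linarith) (by rwa [min_comm]) (le_of_not_ge h21)
    linarith
  rw [min_eq_right h21] at hmin
  have hk₀ : 0 < k := lt_of_lt_of_le (by positivity) hk
  have h2 : 0 < k₂ := lt_of_lt_of_le (by positivity) hmin
  set ε := √k / 300 with hε_def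
  have hsqrt : 300 ≤ √k := by
    rw [show (300 : ℝ) = √(300 ^ 2) by simp]
    exact sqrt_le_sqrt (le_trans (by norm_num) hk)
  have hε : 1 ≤ ε := by linarith
  have hεk : ε ≤ k := by nlinarith [sq_sqrt hk₀.le]
  have hloss : k ^ ((3 : ℝ) / 4) ≤ (k - ε) ^ ((3 : ℝ) / 4) + ε := calc
    k ^ ((3 : ℝ) / 4) = ((k - ε) + ε) ^ ((3 : ℝ) / 4) := by rw [sub_add_cancel]
    _ ≤ (k - ε) ^ ((3 : ℝ) / 4) + ε ^ ((3 : ℝ) / 4) :=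
      rpow_add_le_add_rpow (by linarith) (by linarith) (by norm_num) (by norm_num)
    _ ≤ (k - ε) ^ ((3 : ℝ) / 4) + ε := by
      gcongr
      exact rpow_le_self_of_one_le hε (by norm_num)
  have hmono : (k - ε) ^ ((3 : ℝ) / 4) ≤ (k₁ + k₂) ^ ((3 : ℝ) / 4) :=
    rpow_le_rpow (by linarith) hsum (by norm_num)
  have hsplit := add_rpow_le_rpow_add_mul_rpow_of_le (p := 3 / 4) (by norm_num) (by norm_num) h2 h21
  have hsmall := sqrt_div_two_le_rpow_of_rpow_two_thirds_div_two_le hk₀.le hmin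
  linarith

theorem stmt_18 (k k₁ k₂ : ℝ) (hk : (2 : ℝ) ^ (25 : ℕ) ≤ k) (h1 : 0 < k₁) (h2 : 0 < k₂)
    (hsum : k - Real.sqrt k / 300 ≤ k₁ + k₂)
    (hmin : k ^ ((2 : ℝ) / 3) / 2 ≤ min k₁ k₂) :
    k ^ ((3 : ℝ) / 4) + Real.sqrt k / 300 ≤ k₁ ^ ((3 : ℝ) / 4) + k₂ ^ ((3 : ℝ) / 4) :=
  stmt_18_general k k₁ k₂ hk hsum hmin
end
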